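/- Let (Ŝ, B̂) be any solution of the dirty-model program. Then for every (j,k) ∈ Supp(Ŝ), |b̂_j^(k)| = max_l |b̂_j^(l)| (i.e., the corresponding entry of B̂ attains the maximum magnitude in its row). -/

import Mathlib

open scoped BigOperators Classical

noncomputable section

/-- The objective of the dirty-model program:
`(1/(2n)) Σ_k ‖y^(k) − X^(k)(s^(k) + b^(k))‖₂² + λ_s ‖S‖_{1,1} + λ_b ‖B‖_{1,∞}`. -/
def dirtyObj (n p r : ℕ) (X : Fin r → Matrix (Fin n) (Fin p) ℝ)
    (y : Fin r → Fin n → ℝ) (lamS lamB : ℝ)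
    (S B : Matrix (Fin p) (Fin r) ℝ) : ℝ :=
  (1 / (2 * (n : ℝ))) *
      ∑ k, ∑ i, (y k i - ∑ j, X k i j * (S j k + B j k)) ^ 2
    + lamS * (∑ j, ∑ k, |S j k|)
    + lamB * (∑ j, ⨆ k, |B j k|)

/-- `(Ŝ, B̂)` is a solution (global minimizer) of the dirty-model program. -/
def IsDirtySol (n p r : ℕ) (X : Fin r → Matrix (Fin n) (Fin p) ℝ)
    (y : Fin r → Fin n → ℝ) (lamS lamB : ℝ)
    (Shat Bhat : Matrix (Fin p) (Fin r) ℝ) : Prop :=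
  ∀ S B : Matrix (Fin p) (Fin r) ℝ,
    dirtyObj n p r X y lamS lamB Shat Bhat ≤ dirtyObj n p r X y lamS lamB S B

/-!
If `Ŝ j k ≠ 0` while `|B̂ j k|` is strictly below the maximum of row `j` of `B̂`, move a small
part of `Ŝ j k` into `B̂ j k`. The sum `Ŝ + B̂`, hence the loss, is unchanged; the row maximum of
`B̂` is still attained at another column, so the `ℓ₁/ℓ∞` penalty is unchanged; but `‖Ŝ‖₁,₁`
strictly drops. This contradicts optimality.
-/

open Finset

theorem Matrix.sum_sum_eq_add_of_eq_off {ι κ : Type*} [Fintype ι] [Fintype κ] (g : ℝ → ℝ)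
    {S S' : Matrix ι κ ℝ} {i : ι} {j : κ} (h : ∀ a b, ¬(i = a ∧ j = b) → S' a b = S a b) :
    ∑ a, ∑ b, g (S' a b) = ∑ a, ∑ b, g (S a b) + (g (S' i j) - g (S i j)) := by
  rw [← sub_eq_iff_eq_add', ← sum_sub_distrib]
  simp_rw [← sum_sub_distrib]
  rw [Fintype.sum_eq_single i fun a ha => ?_, Fintype.sum_eq_single j fun b hb => ?_]
  · rw [h i b fun h' => hb h'.2.symm, sub_self]
  · exact sum_eq_zero fun b _ => by rw [h a b fun h' => ha h'.1.symm, sub_self]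

theorem ciSup_eq_of_eq_off {ι : Type*} [Finite ι] {f g : ι → ℝ} {k : ι}
    (hfk : f k < ⨆ l, f l) (hgk : g k ≤ ⨆ l, f l) (h : ∀ l ≠ k, g l = f l) :
    ⨆ l, g l = ⨆ l, f l := by
  have : Nonempty ι := ⟨k⟩
  obtain ⟨l₀, hl₀⟩ := exists_eq_ciSup_of_finite (f := f)
  have hl₀k : l₀ ≠ k := by rintro rfl; exact hfk.ne hl₀
  refine le_antisymm (ciSup_le fun l => ?_) ?_
  · by_cases hl : l = k
    · exact hl ▸ hgk
    · exact (h l hl).symm ▸ le_ciSup (Finite.bddAbove_range f) l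
  · exact hl₀ ▸ h l₀ hl₀k ▸ le_ciSup (Finite.bddAbove_range g) l₀

theorem dirtyObj_of_add_eq {n p r : ℕ} (X : Fin r → Matrix (Fin n) (Fin p) ℝ)
    (y : Fin r → Fin n → ℝ) (lamS lamB : ℝ) {S B S' B' : Matrix (Fin p) (Fin r) ℝ}
    (h : S' + B' = S + B) :
    dirtyObj n p r X y lamS lamB S' B' =
      dirtyObj n p r X y lamS lamB S B + lamS * (∑ j, ∑ k, |S' j k| - ∑ j, ∑ k, |S j k|)
        + lamB * (∑ j, (⨆ k, |B' j k|) - ∑ j, ⨆ k, |B j k|) := by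
  have hentry : ∀ j k, S' j k + B' j k = S j k + B j k := fun j k => congrFun₂ h j k
  simp only [dirtyObj, hentry]
  ring

theorem dirtyObj_transfer {n p r : ℕ} (X : Fin r → Matrix (Fin n) (Fin p) ℝ)
    (y : Fin r → Fin n → ℝ) (lamS lamB : ℝ) (S B : Matrix (Fin p) (Fin r) ℝ) (j : Fin p)
    (k : Fin r) {t : ℝ} (ht₀ : 0 ≤ t) (ht₁ : t ≤ 1)
    (hB : |B j k| + t * |S j k| ≤ ⨆ l, |B j l|) (hBk : |B j k| < ⨆ l, |B j l|) :
    dirtyObj n p r X y lamS lamB (S - Matrix.single j k (t * S j k))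
        (B + Matrix.single j k (t * S j k)) =
      dirtyObj n p r X y lamS lamB S B - lamS * (t * |S j k|) := by
  set D := Matrix.single j k (t * S j k) with hD
  have hoff : ∀ a b, ¬(j = a ∧ k = b) → D a b = 0 := Matrix.single_apply_of_ne j k _
  have hS : ∑ a, ∑ b, |(S - D) a b| = ∑ a, ∑ b, |S a b| - t * |S j k| := by
    rw [Matrix.sum_sum_eq_add_of_eq_off (S := S) abs fun a b hab => by
      simp [hoff a b hab]]
    have : |S j k - t * S j k| = (1 - t) * |S j k| := by
      rw [← one_sub_mul, abs_mul, abs_of_nonneg (sub_nonneg.2 ht₁)]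
    rw [Matrix.sub_apply, hD, Matrix.single_apply_same, this]
    ring
  have hrow : ∀ a, ⨆ b, |(B + D) a b| = ⨆ b, |B a b| := by
    intro a
    by_cases ha : a = j
    · subst ha
      refine ciSup_eq_of_eq_off hBk ?_ fun l hl => by
        simp [hoff a l fun h => hl h.2.symm]
      calc |(B + D) a k| ≤ |B a k| + |t * S a k| := by
            simpa [D] using abs_add_le (B a k) (t * S a k)
        _ ≤ ⨆ l, |B a l| := by rwa [abs_mul, abs_of_nonneg ht₀]
    · simp [hoff a _ fun h => ha h.1.symm]
  rw [dirtyObj_of_add_eq X y lamS lamB (sub_add_add_cancel S B D), hS]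
  simp only [hrow]
  ring

theorem dirty_model_support_attains_rowmax_general
    (n p r : ℕ)
    (X : Fin r → Matrix (Fin n) (Fin p) ℝ) (y : Fin r → Fin n → ℝ)
    (lamS lamB : ℝ) (hlamS : 0 < lamS)
    (Shat Bhat : Matrix (Fin p) (Fin r) ℝ)
    (hsol : IsDirtySol n p r X y lamS lamB Shat Bhat)
    (j : Fin p) (k : Fin r) (hjk : Shat j k ≠ 0) :
    |Bhat j k| = ⨆ l, |Bhat j l| := by
  refine le_antisymm (le_ciSup (f := fun l => |Bhat j l|) (Finite.bddAbove_range _) k)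
    (not_lt.1 fun hlt => ?_)
  have hs : 0 < |Shat j k| := abs_pos.2 hjk
  have hgap : 0 < ((⨆ l, |Bhat j l|) - |Bhat j k|) / |Shat j k| := div_pos (sub_pos.2 hlt) hs
  set t := min 1 (((⨆ l, |Bhat j l|) - |Bhat j k|) / |Shat j k|)
  have ht : 0 < t := lt_min one_pos hgap
  have hfit : |Bhat j k| + t * |Shat j k| ≤ ⨆ l, |Bhat j l| := by
    linarith [(le_div_iff₀ hs).1 (min_le_right 1 _ : t ≤ _)]
  have hbetter := hsol (Shat - Matrix.single j k (t * Shat j k))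
    (Bhat + Matrix.single j k (t * Shat j k))
  rw [dirtyObj_transfer X y lamS lamB Shat Bhat j k ht.le (min_le_left _ _) hfit hlt] at hbetter
  linarith [mul_pos hlamS (mul_pos ht hs)]

/-- For any solution `(Ŝ, B̂)` of the dirty-model program and any
`(j,k)` in the support of `Ŝ`, the entry `|b̂_j^(k)|` attains the maximum magnitude
in its row: `|b̂_j^(k)| = max_l |b̂_j^(l)|`. -/
theorem dirty_model_support_attains_rowmax
    (n p r : ℕ) (hn : 1 ≤ n) (hp : 1 ≤ p) (hr : 1 ≤ r)
    (X : Fin r → Matrix (Fin n) (Fin p) ℝ) (y : Fin r → Fin n → ℝ)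
    (lamS lamB : ℝ) (hlamS : 0 < lamS) (hlamB : 0 < lamB)
    (Shat Bhat : Matrix (Fin p) (Fin r) ℝ)
    (hsol : IsDirtySol n p r X y lamS lamB Shat Bhat)
    (j : Fin p) (k : Fin r) (hjk : Shat j k ≠ 0) :
    |Bhat j k| = ⨆ l, |Bhat j l| :=
  dirty_model_support_attains_rowmax_general n p r X y lamS lamB hlamS Shat Bhat hsol j k hjk
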